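/- Let A = (Q, E, s, F) be a Wheeler GDFA. Then: (1) s comes first in the total order ⪯_A (that is, s ⪯_A u for every u ∈ Q); (2) for every (u', u, ρ), (v', v, ρ') ∈ E, if u ≺_A v and ρ' is not a strict suffix of ρ, then ρ ⪯ ρ' in co-lexicographic order; (3) for every (u', u, ρ), (v', v, ρ) ∈ E, if u ≺_A v, then u' ≺_A v'. -/

import Mathlib

/-!
Common framework: generalized automata (GNFAs/GDFAs) over a finite alphabet `A`,
following the paper "A Myhill-Nerode theorem for generalized automata".
Strings over `A` are modeled as `List A`.
-/

/-- A path of edges (from `E`) from a state to a state whose concatenated labels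
form the given string. -/
inductive EdgePath {A Q : Type} (E : Set (Q × Q × List A)) : Q → List A → Q → Prop
  | refl (u : Q) : EdgePath E u [] u
  | step {u v w : Q} {ρ α : List A} :
      (u, v, ρ) ∈ E → EdgePath E v α w → EdgePath E u (ρ ++ α) w

/-- A generalized nondeterministic finite automaton (GNFA) over alphabet `A`
with a finite state type `Q`: a finite set of string-labeled edges, an initial state,
a set of final states; every state is reachable from the initial state and
co-reachable (final, or a path leads from it to a final state). -/
structure GNFA (A Q : Type) where
  E : Set (Q × Q × List A)
  init : Q
  final : Set Q
  finQ : Finite Q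
  finE : E.Finite
  reach : ∀ u : Q, ∃ α : List A, EdgePath E init α u
  coreach : ∀ u : Q, ∃ (α : List A) (v : Q), v ∈ final ∧ EdgePath E u α v

namespace GNFA

variable {A Q : Type}

/-- `I_α`: the set of states reached from the initial state by reading `α`. -/
def Iword (M : GNFA A Q) (α : List A) : Set Q := {u | EdgePath M.E M.init α u}

/-- `I_u`: the set of strings that can be read from the initial state to `u`. -/
def Istate (M : GNFA A Q) (u : Q) : Set (List A) := {α | EdgePath M.E M.init α u}

/-- The language recognized by the automaton. -/
def Lang (M : GNFA A Q) : Set (List A) := {α | ∃ u ∈ M.final, EdgePath M.E M.init α u}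

/-- `W(A) = ⋃_{u ∈ Q} I_u`. -/
def WSet (M : GNFA A Q) : Set (List A) := {α | ∃ u : Q, EdgePath M.E M.init α u}

/-- A GNFA is a GDFA if: no edge is labeled with the empty string, distinct edges
leaving a state have distinct labels, and the labels of edges leaving a state form
a prefix-free set. -/
def IsGDFA (M : GNFA A Q) : Prop :=
  (∀ u v ρ, (u, v, ρ) ∈ M.E → ρ ≠ []) ∧
  (∀ u v v' ρ, (u, v, ρ) ∈ M.E → (u, v', ρ) ∈ M.E → v = v') ∧
  (∀ u v v' ρ ρ', (u, v, ρ) ∈ M.E → (u, v', ρ') ∈ M.E → ρ <+: ρ' → ρ = ρ')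

end GNFA

/-- Isomorphism of GNFAs: a bijection of states preserving the initial state,
final states and labeled edges. -/
def GNFA.Isomorphic {A Q₁ Q₂ : Type} (M : GNFA A Q₁) (N : GNFA A Q₂) : Prop :=
  ∃ φ : Q₁ ≃ Q₂, φ M.init = N.init ∧ (∀ u, u ∈ M.final ↔ φ u ∈ N.final) ∧
    ∀ u v ρ, (u, v, ρ) ∈ M.E ↔ (φ u, φ v, ρ) ∈ N.E

section LangDefs
variable {A : Type}

/-- `Pref L`: the set of prefixes of strings of `L`. -/
def Pref (L : Set (List A)) : Set (List A) := {α | ∃ β ∈ L, α <+: β}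

/-- Prefix-free kernel: the strings of `X` having no strict prefix in `X`. -/
def pfKernel (X : Set (List A)) : Set (List A) :=
  {α ∈ X | ∀ β, β <+: α → β ≠ α → β ∉ X}

/-- `T_α = {ρ ∈ Σ⁺ : αρ ∈ W}`. -/
def Tset (W : Set (List A)) (α : List A) : Set (List A) := {ρ | ρ ≠ [] ∧ α ++ ρ ∈ W}

/-- `W` is locally bounded if `K(T_α)` is finite for every `α ∈ W`. -/
def LocallyBounded (W : Set (List A)) : Prop := ∀ α ∈ W, (pfKernel (Tset W α)).Finite

/-- `r` is an equivalence relation on `W`. -/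
def IsEquivOn (W : Set (List A)) (r : List A → List A → Prop) : Prop :=
  (∀ α ∈ W, r α α) ∧
  (∀ α β, α ∈ W → β ∈ W → r α β → r β α) ∧
  (∀ α β γ, α ∈ W → β ∈ W → γ ∈ W → r α β → r β γ → r α γ)

/-- Right-invariance of an equivalence relation on `W`. -/
def RightInvariant (W : Set (List A)) (r : List A → List A → Prop) : Prop :=
  ∀ α ∈ W, ∀ β ∈ W, r α β → ∀ φ : List A,
    (α ++ φ ∈ W ↔ β ++ φ ∈ W) ∧ (α ++ φ ∈ W → r (α ++ φ) (β ++ φ))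

/-- The right-invariant refinement of `r` on `W`. -/
def riRef (W : Set (List A)) (r : List A → List A → Prop) :
    List A → List A → Prop := fun α β =>
  ∀ φ : List A, (α ++ φ ∈ W ↔ β ++ φ ∈ W) ∧ (α ++ φ ∈ W → r (α ++ φ) (β ++ φ))

/-- The Myhill–Nerode equivalence `≡_{L,W}`: the right-invariant refinement of
`α ∼_{L,W} β ⟺ (α ∈ L ⟺ β ∈ L)`. -/
def mnEquiv (L W : Set (List A)) : List A → List A → Prop :=
  riRef W (fun α β => (α ∈ L ↔ β ∈ L))

/-- The `r`-class of `α` inside `W`. -/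
def eqClass (W : Set (List A)) (r : List A → List A → Prop) (α : List A) :
    Set (List A) := {β ∈ W | r α β}

/-- `r` has finite index on `W`: the set of its classes is finite. -/
def FiniteIndex (W : Set (List A)) (r : List A → List A → Prop) : Prop :=
  {s : Set (List A) | ∃ α ∈ W, s = eqClass W r α}.Finite

/-- `L` is a union of `r`-classes (for `L ⊆ W`). -/
def UnionOfClasses (W : Set (List A)) (r : List A → List A → Prop)
    (L : Set (List A)) : Prop := ∀ α ∈ L, ∀ β ∈ W, r α β → β ∈ L

end LangDefs

namespace GNFA
variable {A Q : Type}

/-- `α ∼_A β ⟺ I_α = I_β` (on `W(A)`). -/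
def simA (M : GNFA A Q) : List A → List A → Prop := fun α β => M.Iword α = M.Iword β

/-- `≡_A`: the right-invariant refinement of `∼_A` on `W(A)`. -/
def equivA (M : GNFA A Q) : List A → List A → Prop := riRef M.WSet M.simA

end GNFA

section WheelerDefs
variable {A Q : Type} [LinearOrder A]

/-- Co-lexicographic strict order on strings: compare reverses lexicographically. -/
def colexLt (α β : List A) : Prop := List.Lex (· < ·) α.reverse β.reverse

/-- Co-lexicographic (reflexive) order on strings. -/
def colexLe (α β : List A) : Prop := colexLt α β ∨ α = β

namespace GNFA

/-- The relation `⪯_A` on states: reflexive, and for distinct `u, v`,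
`u ≺_A v` iff every string of `I_u` is co-lexicographically smaller than
every string of `I_v`. -/
def ordA (M : GNFA A Q) (u v : Q) : Prop :=
  u = v ∨ ∀ α ∈ M.Istate u, ∀ β ∈ M.Istate v, colexLt α β

/-- The strict relation `≺_A`. -/
def sordA (M : GNFA A Q) (u v : Q) : Prop := u ≠ v ∧ M.ordA u v

/-- A GDFA is Wheeler if `⪯_A` is a total order on states. -/
def Wheeler (M : GNFA A Q) : Prop :=
  (∀ u v, M.ordA u v → M.ordA v u → u = v) ∧
  (∀ u v w, M.ordA u v → M.ordA v w → M.ordA u w) ∧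
  (∀ u v, M.ordA u v ∨ M.ordA v u)

/-- `G^≺(α)`: states reached only by strings co-lexicographically smaller than `α`. -/
def Gprec (M : GNFA A Q) (α : List A) : Set Q := {u | ∀ β ∈ M.Istate u, colexLt β α}

/-- `G_⊣(α)`: states reached by some string suffixed by `α`. -/
def Gsuf (M : GNFA A Q) (α : List A) : Set Q := {u | ∃ β ∈ M.Istate u, α <:+ β}

/-- `G^≺_⊣(α) = G^≺(α) ∪ G_⊣(α)`. -/
def GprecSuf (M : GNFA A Q) (α : List A) : Set Q := M.Gprec α ∪ M.Gsuf α

/-- `G*(α)`: states reached by an edge whose label is suffixed by `α`. -/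
def Gstar (M : GNFA A Q) (α : List A) : Set Q :=
  {v | ∃ v' ρ, (v', v, ρ) ∈ M.E ∧ α <:+ ρ}

/-- `λ(u)`: the set of nonempty strings labeling some edge entering `u`. -/
def lam (M : GNFA A Q) (u : Q) : Set (List A) := {ρ | ρ ≠ [] ∧ ∃ u', (u', u, ρ) ∈ M.E}

/-- `out(U, ρ)`: the number of edges labeled `ρ` leaving states in `U`. -/
noncomputable def outCount (M : GNFA A Q) (U : Set Q) (ρ : List A) : ℕ :=
  {e ∈ M.E | e.1 ∈ U ∧ e.2.2 = ρ}.ncard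

/-- `in(U, ρ)`: the number of edges labeled `ρ` entering states in `U`. -/
noncomputable def inCount (M : GNFA A Q) (U : Set Q) (ρ : List A) : ℕ :=
  {e ∈ M.E | e.2.1 ∈ U ∧ e.2.2 = ρ}.ncard

end GNFA

/-- `seg q j = Q[1, j]`: the first `j` states in the enumeration `q` of the states. -/
def seg {Q : Type} {n : ℕ} (q : Fin n → Q) (j : ℕ) : Set Q :=
  {u | ∃ i : Fin n, (i : ℕ) < j ∧ q i = u}

end WheelerDefs

/-!
Reading an edge `(u', u, ρ)` after any string of `I_{u'}` gives a string of `I_u`, so `u ≺_A v`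
forces `α ρ ≺ β ρ'` for all `α ∈ I_{u'}`, `β ∈ I_{v'}`. Each claim then follows from a
co-lexicographic inversion of such extended strings: appending a common suffix preserves `≺`,
and `ρ' ≺ ρ` with `ρ'` not a suffix of `ρ` already decides `β ρ' ≺ α ρ`. Totality of `⪯_A`
turns "not `v ≺_A u`" into "`u ⪯_A v`", and determinism excludes `u' = v'` in (3).
-/

theorem EdgePath.trans {A Q : Type} {E : Set (Q × Q × List A)} {u v w : Q} {α β : List A}
    (h₁ : EdgePath E u α v) (h₂ : EdgePath E v β w) : EdgePath E u (α ++ β) w := by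
  induction h₁ with
  | refl => exact h₂
  | step he _ ih => rw [List.append_assoc]; exact .step he (ih h₂)

theorem EdgePath.of_mem {A Q : Type} {E : Set (Q × Q × List A)} {u v : Q} {ρ : List A}
    (h : (u, v, ρ) ∈ E) : EdgePath E u ρ v := by
  simpa using EdgePath.step h (.refl v)

theorem List.Lex.append_of_not_prefix {α : Type*} {r : α → α → Prop} {a b : List α}
    (h : List.Lex r a b) (hab : ¬ a <+: b) (x y : List α) : List.Lex r (a ++ x) (b ++ y) := by
  induction h with
  | nil => exact absurd List.nil_prefix hab
  | cons _ ih => exact .cons (ih fun hp => hab (List.cons_prefix_cons.mpr ⟨rfl, hp⟩))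
  | rel h => exact .rel h

section Colex

variable {A : Type} [LinearOrder A]

theorem colexLt_iff_reverse_lt {α β : List A} : colexLt α β ↔ α.reverse < β.reverse := Iff.rfl

theorem colexLt_asymm {α β : List A} (h : colexLt α β) : ¬ colexLt β α :=
  lt_asymm (colexLt_iff_reverse_lt.mp h)

theorem not_colexLt_nil (α : List A) : ¬ colexLt α [] :=
  List.not_lex_nil

theorem colexLt_of_not_colexLe {α β : List A} (h : ¬ colexLe α β) : colexLt β α := by
  rcases lt_trichotomy α.reverse β.reverse with hlt | heq | hgt
  · exact absurd (Or.inl hlt) h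
  · exact absurd (Or.inr (List.reverse_injective heq)) h
  · exact hgt

theorem colexLt.append_right {α β : List A} (h : colexLt α β) (ρ : List A) :
    colexLt (α ++ ρ) (β ++ ρ) := by
  simpa only [colexLt, List.reverse_append] using List.Lex.append_left _ h ρ.reverse

theorem colexLt.append_of_not_suffix {ρ ρ' : List A} (h : colexLt ρ ρ') (hs : ¬ ρ <:+ ρ')
    (α β : List A) : colexLt (α ++ ρ) (β ++ ρ') := by
  have hp : ¬ ρ.reverse <+: ρ'.reverse := fun hp => hs (List.reverse_prefix.mp hp)
  simpa only [colexLt, List.reverse_append] using h.append_of_not_prefix hp α.reverse β.reverse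

end Colex

namespace GNFA

variable {A Q : Type} {M : GNFA A Q}

theorem append_mem_Istate {u' u : Q} {α ρ : List A} (hα : α ∈ M.Istate u')
    (he : (u', u, ρ) ∈ M.E) : α ++ ρ ∈ M.Istate u :=
  EdgePath.trans hα (.of_mem he)

theorem Istate_nonempty (M : GNFA A Q) (u : Q) : (M.Istate u).Nonempty :=
  M.reach u

variable [LinearOrder A]

theorem sordA.colexLt_of_mem {u v : Q} (h : M.sordA u v) {α β : List A}
    (hα : α ∈ M.Istate u) (hβ : β ∈ M.Istate v) : colexLt α β :=
  (h.2.resolve_left h.1) α hα β hβ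

theorem sordA.not_colexLt_of_mem {u v : Q} (h : M.sordA u v) {α β : List A}
    (hα : α ∈ M.Istate u) (hβ : β ∈ M.Istate v) : ¬ colexLt β α :=
  colexLt_asymm (h.colexLt_of_mem hα hβ)

theorem ordA_of_not_sordA (htot : ∀ u v, M.ordA u v ∨ M.ordA v u) {u v : Q}
    (h : ¬ M.sordA v u) : M.ordA u v := by
  rcases htot u v with huv | hvu
  · exact huv
  · by_cases heq : v = u
    · exact .inl heq.symm
    · exact absurd ⟨heq, hvu⟩ h

theorem init_ordA (htot : ∀ u v, M.ordA u v ∨ M.ordA v u) (u : Q) : M.ordA M.init u := by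
  refine ordA_of_not_sordA htot fun h => ?_
  obtain ⟨β, hβ⟩ := M.Istate_nonempty u
  exact not_colexLt_nil β (h.colexLt_of_mem hβ (.refl M.init))

theorem colexLe_of_sordA {u' u v' v : Q} {ρ ρ' : List A} (hu : (u', u, ρ) ∈ M.E)
    (hv : (v', v, ρ') ∈ M.E) (huv : M.sordA u v) (hsuf : ¬ (ρ' <:+ ρ ∧ ρ' ≠ ρ)) :
    colexLe ρ ρ' := by
  by_contra hle
  have hsuf' : ¬ ρ' <:+ ρ := fun hs => hsuf ⟨hs, fun heq => hle (.inr heq.symm)⟩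
  obtain ⟨α, hα⟩ := M.Istate_nonempty u'
  obtain ⟨β, hβ⟩ := M.Istate_nonempty v'
  exact huv.not_colexLt_of_mem (append_mem_Istate hα hu) (append_mem_Istate hβ hv)
    ((colexLt_of_not_colexLe hle).append_of_not_suffix hsuf' β α)

theorem sordA_source_of_sordA (hdet : ∀ u v v' ρ, (u, v, ρ) ∈ M.E → (u, v', ρ) ∈ M.E → v = v')
    (htot : ∀ u v, M.ordA u v ∨ M.ordA v u) {u' u v' v : Q} {ρ : List A}
    (hu : (u', u, ρ) ∈ M.E) (hv : (v', v, ρ) ∈ M.E) (huv : M.sordA u v) : M.sordA u' v' := by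
  have hne : u' ≠ v' := by
    rintro rfl
    exact huv.1 (hdet u' u v ρ hu hv)
  refine ⟨hne, ordA_of_not_sordA htot fun hvu => ?_⟩
  obtain ⟨α, hα⟩ := M.Istate_nonempty u'
  obtain ⟨β, hβ⟩ := M.Istate_nonempty v'
  exact huv.not_colexLt_of_mem (append_mem_Istate hα hu) (append_mem_Istate hβ hv)
    ((hvu.colexLt_of_mem hβ hα).append_right ρ)

end GNFA

theorem wheeler_GDFA_local_properties_general {A Q : Type} [LinearOrder A]
    (M : GNFA A Q) (hD : M.IsGDFA) (hW : M.Wheeler) :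
    (∀ u : Q, M.ordA M.init u) ∧
    (∀ u' u v' v : Q, ∀ ρ ρ' : List A, (u', u, ρ) ∈ M.E → (v', v, ρ') ∈ M.E →
      M.sordA u v → ¬(ρ' <:+ ρ ∧ ρ' ≠ ρ) → colexLe ρ ρ') ∧
    (∀ u' u v' v : Q, ∀ ρ : List A, (u', u, ρ) ∈ M.E → (v', v, ρ) ∈ M.E →
      M.sordA u v → M.sordA u' v') :=
  ⟨GNFA.init_ordA hW.2.2,
    fun _ _ _ _ _ _ hu hv huv hsuf => GNFA.colexLe_of_sordA hu hv huv hsuf,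
    fun _ _ _ _ _ hu hv huv => GNFA.sordA_source_of_sordA hD.2.1 hW.2.2 hu hv huv⟩

/-- Properties of a Wheeler GDFA: (1) the initial state comes first in `⪯_A`;
(2) for edges `(u', u, ρ)` and `(v', v, ρ')`, if `u ≺_A v` and `ρ'` is not a strict
suffix of `ρ`, then `ρ ⪯ ρ'` co-lexicographically; (3) for edges with equal labels,
`u ≺_A v` implies `u' ≺_A v'`. -/
theorem wheeler_GDFA_local_properties {A Q : Type} [Fintype A] [LinearOrder A]
    (M : GNFA A Q) (hD : M.IsGDFA) (hW : M.Wheeler) :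
    (∀ u : Q, M.ordA M.init u) ∧
    (∀ u' u v' v : Q, ∀ ρ ρ' : List A, (u', u, ρ) ∈ M.E → (v', v, ρ') ∈ M.E →
      M.sordA u v → ¬(ρ' <:+ ρ ∧ ρ' ≠ ρ) → colexLe ρ ρ') ∧
    (∀ u' u v' v : Q, ∀ ρ : List A, (u', u, ρ) ∈ M.E → (v', v, ρ) ∈ M.E →
      M.sordA u v → M.sordA u' v') :=
  wheeler_GDFA_local_properties_general M hD hW
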